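/- Let m ≥ 2, let H ≤ Sym(m) be transitive, and let K be a closed subgroup of the iterated wreath product W_H. For G_K = ⟨H, D_m(K)⟩, the first rigid level stabilizer is trivial: rist_{G_K}(v) = 1 for every first-level vertex v, hence Rist_{G_K}(1) = 1 and G_K is not weakly branch. -/

import Mathlib

open Filter Topology

/-- Vertices of the `m`-adic rooted tree: finite words over an alphabet of size `m`. -/
abbrev Vtx (m : ℕ) := List (Fin m)

/-- The iterated wreath product `W_H ≤ Aut T`: permutations `f` of the vertex set that fix
the root and such that at every vertex `v` there is a local permutation `σ ∈ H` with
`f (v ++ [x]) = f v ++ [σ x]` for every letter `x`.  (This encodes exactly the automorphisms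
of the `m`-adic tree whose local permutation at every vertex lies in `H`.) -/
def wreath (m : ℕ) (H : Subgroup (Equiv.Perm (Fin m))) : Subgroup (Equiv.Perm (Vtx m)) where
  carrier := {f | f [] = [] ∧
    ∀ v : Vtx m, ∃ σ ∈ H, ∀ x : Fin m, f (v ++ [x]) = f v ++ [σ x]}
  one_mem' := ⟨rfl, fun _ => ⟨1, H.one_mem, fun _ => rfl⟩⟩
  mul_mem' := by
    rintro f g ⟨hf0, hf⟩ ⟨hg0, hg⟩
    refine ⟨?_, fun v => ?_⟩
    · show f (g []) = []
      rw [hg0, hf0]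
    · obtain ⟨τ, hτ, hτ'⟩ := hg v
      obtain ⟨σ, hσ, hσ'⟩ := hf (g v)
      refine ⟨σ * τ, H.mul_mem hσ hτ, fun x => ?_⟩
      show f (g (v ++ [x])) = f (g v) ++ [σ (τ x)]
      rw [hτ' x, hσ' (τ x)]
  inv_mem' := by
    rintro f ⟨hf0, hf⟩
    refine ⟨?_, fun v => ?_⟩
    · calc (f⁻¹ : Equiv.Perm (Vtx m)) [] = f⁻¹ (f []) := by rw [hf0]
        _ = [] := Equiv.symm_apply_apply f []
    · obtain ⟨σ, hσ, hσ'⟩ := hf (f⁻¹ v)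
      refine ⟨σ⁻¹, H.inv_mem hσ, fun x => ?_⟩
      apply Equiv.injective f
      rw [hσ' (σ⁻¹ x)]
      simp

/-- The pointwise stabilizer (in the full permutation group of the vertex set)
of the vertices of the first `n` levels of the tree. -/
def levelStab (m n : ℕ) : Subgroup (Equiv.Perm (Vtx m)) :=
  ⨅ v ∈ {v : Vtx m | v.length ≤ n}, MulAction.stabilizer (Equiv.Perm (Vtx m)) v

/-- The Hausdorff dimension of `X` in `G` with respect to the level-stabilizer filtration:
`hdimIn m G X = liminf_n log|X : St_X(n)| / log|G : St_G(n)|`. -/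
noncomputable def hdimIn (m : ℕ) (G X : Subgroup (Equiv.Perm (Vtx m))) : ℝ :=
  Filter.liminf (fun n : ℕ =>
    Real.log ((levelStab m n).relIndex X) / Real.log ((levelStab m n).relIndex G)) Filter.atTop

/-- `X` has strong Hausdorff dimension `α` in `G` if the sequence
`log|X : St_X(n)| / log|G : St_G(n)|` converges to `α` (a proper limit). -/
def hasStrongHdim (m : ℕ) (G X : Subgroup (Equiv.Perm (Vtx m))) (α : ℝ) : Prop :=
  Filter.Tendsto (fun n : ℕ =>
    Real.log ((levelStab m n).relIndex X) / Real.log ((levelStab m n).relIndex G))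
    Filter.atTop (nhds α)

/-- The closure of a subgroup of `Aut T` in the profinite (congruence) topology:
`cl(G) = ⋂_n G · St(n)`. -/
def treeClosure (m : ℕ) (G : Subgroup (Equiv.Perm (Vtx m))) : Subgroup (Equiv.Perm (Vtx m)) :=
  ⨅ n : ℕ, G ⊔ levelStab m n

/-- A subgroup of `Aut T` is closed (in the profinite topology) iff it equals its closure. -/
def IsTreeClosed (m : ℕ) (G : Subgroup (Equiv.Perm (Vtx m))) : Prop :=
  treeClosure m G = G

/-- `G` acts transitively on every level of the tree. -/
def LevelTransitive (m : ℕ) (G : Subgroup (Equiv.Perm (Vtx m))) : Prop :=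
  ∀ u v : Vtx m, u.length = v.length → ∃ g ∈ G, g u = v

/-- `G` is self-similar: the section of any `g ∈ G` at any vertex `v` again belongs to `G`,
i.e. there is `h ∈ G` with `g (v ++ u) = g v ++ h u` for all words `u`. -/
def SelfSimilar (m : ℕ) (G : Subgroup (Equiv.Perm (Vtx m))) : Prop :=
  ∀ g ∈ G, ∀ v : Vtx m, ∃ h ∈ G, ∀ u : Vtx m, g (v ++ u) = g v ++ h u

/-- The rigid vertex stabilizer of `v` in `G`: elements of `G` fixing `v` and every vertex
outside the subtree rooted at `v`. -/
def rist (m : ℕ) (G : Subgroup (Equiv.Perm (Vtx m))) (v : Vtx m) :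
    Subgroup (Equiv.Perm (Vtx m)) :=
  G ⊓ ⨅ u ∈ {u : Vtx m | u = v ∨ ¬ v <+: u}, MulAction.stabilizer (Equiv.Perm (Vtx m)) u

/-- The rigid level stabilizer `Rist_G(n)`: the (internal direct) product of the rigid
vertex stabilizers of the vertices at level `n`, i.e. the subgroup they generate. -/
def RistL (m : ℕ) (G : Subgroup (Equiv.Perm (Vtx m))) (n : ℕ) :
    Subgroup (Equiv.Perm (Vtx m)) :=
  ⨆ v ∈ {v : Vtx m | v.length = n}, rist m G v

/-- `N` is a normal subgroup of `G` (both given as subgroups of an ambient group). -/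
def NormalIn {X : Type*} [Group X] (N G : Subgroup X) : Prop :=
  N ≤ G ∧ ∀ g ∈ G, ∀ x ∈ N, g * x * g⁻¹ ∈ N

/-- The rooted automorphism associated to `σ`: it permutes the first letter by `σ` and is
trivial elsewhere. -/
def rootedPerm (m : ℕ) (σ : Equiv.Perm (Fin m)) : Equiv.Perm (Vtx m) where
  toFun v := match v with
    | [] => []
    | x :: w => σ x :: w
  invFun v := match v with
    | [] => []
    | x :: w => σ⁻¹ x :: w
  left_inv v := by cases v with
    | nil => rfl
    | cons x w => simp
  right_inv v := by cases v with
    | nil => rfl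
    | cons x w => simp

/-- The embedding `H → W_H` by rooted automorphisms, as a group homomorphism. -/
def rootedHom (m : ℕ) : Equiv.Perm (Fin m) →* Equiv.Perm (Vtx m) where
  toFun := rootedPerm m
  map_one' := by
    ext v
    cases v <;> rfl
  map_mul' σ τ := by
    ext v
    cases v <;> rfl

/-- `D_m(K)`: the preimage under the first-level section map `ψ` of the diagonal copy
`{(k,…,k) : k ∈ K}`, i.e. those `f` fixing the first level whose section at every
first-level vertex is one and the same element `k ∈ K`. -/
def diagSub (m : ℕ) (K : Subgroup (Equiv.Perm (Vtx m))) : Subgroup (Equiv.Perm (Vtx m)) where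
  carrier := {f | f [] = [] ∧ ∃ k ∈ K, ∀ (x : Fin m) (u : Vtx m), f (x :: u) = x :: k u}
  one_mem' := ⟨rfl, 1, K.one_mem, fun _ _ => rfl⟩
  mul_mem' := by
    rintro f g ⟨hf0, kf, hkf, hf⟩ ⟨hg0, kg, hkg, hg⟩
    refine ⟨?_, kf * kg, K.mul_mem hkf hkg, fun x u => ?_⟩
    · show f (g []) = []
      rw [hg0, hf0]
    · show f (g (x :: u)) = x :: kf (kg u)
      rw [hg x u, hf x (kg u)]
  inv_mem' := by
    rintro f ⟨hf0, k, hk, hf⟩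
    refine ⟨?_, k⁻¹, K.inv_mem hk, fun x u => ?_⟩
    · calc (f⁻¹ : Equiv.Perm (Vtx m)) [] = f⁻¹ (f []) := by rw [hf0]
        _ = [] := Equiv.symm_apply_apply f []
    · apply Equiv.injective f
      rw [hf x (k⁻¹ u)]
      simp

/-- The group `G_K = ⟨H, D_m(K)⟩`, where `H` acts by rooted automorphisms. -/
def diagGroup (m : ℕ) (H : Subgroup (Equiv.Perm (Fin m))) (K : Subgroup (Equiv.Perm (Vtx m))) :
    Subgroup (Equiv.Perm (Vtx m)) :=
  H.map (rootedHom m) ⊔ diagSub m K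

/-- The center of a subgroup `G` of an ambient group, as a subgroup of the ambient group. -/
def centerOf {X : Type*} [Group X] (G : Subgroup X) : Subgroup X :=
  Subgroup.centralizer (G : Set X) ⊓ G

/-- The `G`-orbit of a vertex `v`. -/
def orbitSet (m : ℕ) (G : Subgroup (Equiv.Perm (Vtx m))) (v : Vtx m) : Set (Vtx m) :=
  {w | ∃ g ∈ G, g v = w}

/-- The number of `G`-orbits on the `n`-th level of the tree. -/
noncomputable def numOrbits (m : ℕ) (G : Subgroup (Equiv.Perm (Vtx m))) (n : ℕ) : ℕ :=
  Nat.card {s : Set (Vtx m) // ∃ v : Vtx m, v.length = n ∧ s = orbitSet m G v}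

/-!
Every element of `G_K` acts on a word `x :: u` as `σ x :: k u`, with one and the same `k`
below every first-level vertex. An element of `rist(v)` for a first-level vertex `v` fixes
the whole subtree below another first-level vertex, which forces `k = 1`, and it fixes the
first level, which forces `σ = 1`.
-/

namespace List

variable {α : Type*}

def consPerm : Equiv.Perm α × Equiv.Perm (List α) →* Equiv.Perm (List α) where
  toFun p :=
    { toFun := fun | [] => [] | x :: u => p.1 x :: p.2 u
      invFun := fun | [] => [] | x :: u => p.1⁻¹ x :: p.2⁻¹ u
      left_inv := by rintro (_ | ⟨x, u⟩) <;> simp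
      right_inv := by rintro (_ | ⟨x, u⟩) <;> simp }
  map_one' := by ext (_ | ⟨x, u⟩) <;> rfl
  map_mul' _ _ := by ext (_ | ⟨x, u⟩) <;> rfl

@[simp]
theorem consPerm_apply_nil (p : Equiv.Perm α × Equiv.Perm (List α)) : consPerm p [] = [] :=
  rfl

@[simp]
theorem consPerm_apply_cons (p : Equiv.Perm α × Equiv.Perm (List α)) (x : α) (u : List α) :
    consPerm p (x :: u) = p.1 x :: p.2 u :=
  rfl

theorem consPerm_eq_one [Nontrivial α] {p : Equiv.Perm α × Equiv.Perm (List α)} (x₀ : α)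
    (hfix : ∀ x u, (x ≠ x₀ ∨ u = []) → consPerm p (x :: u) = x :: u) : consPerm p = 1 := by
  obtain ⟨y, hy⟩ := exists_ne x₀
  have htail : p.2 = 1 := Equiv.ext fun u => (List.cons.inj (hfix y u (.inl hy))).2
  have hhead : p.1 = 1 := Equiv.ext fun x => (List.cons.inj (hfix x [] (.inr rfl))).1
  rw [show p = 1 from Prod.ext hhead htail, map_one]

end List

open List

theorem rootedHom_eq_consPerm (m : ℕ) (σ : Equiv.Perm (Fin m)) :
    rootedHom m σ = consPerm (σ, 1) := by
  ext (_ | ⟨x, u⟩) <;> rfl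

theorem mem_diagSub_iff {m : ℕ} {K : Subgroup (Equiv.Perm (Vtx m))} {f : Equiv.Perm (Vtx m)} :
    f ∈ diagSub m K ↔ ∃ k ∈ K, f = consPerm (1, k) := by
  constructor
  · rintro ⟨hf0, k, hk, hf⟩
    exact ⟨k, hk, by ext (_ | ⟨x, u⟩) <;> simp [hf0, hf]⟩
  · rintro ⟨k, hk, rfl⟩
    exact ⟨rfl, k, hk, fun _ _ => rfl⟩

theorem diagGroup_le_range_consPerm (m : ℕ) (H : Subgroup (Equiv.Perm (Fin m)))
    (K : Subgroup (Equiv.Perm (Vtx m))) :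
    diagGroup m H K ≤ (consPerm : _ →* Equiv.Perm (Vtx m)).range := by
  refine sup_le ?_ ?_
  · rintro _ ⟨σ, -, rfl⟩
    exact ⟨(σ, 1), (rootedHom_eq_consPerm m σ).symm⟩
  · intro f hf
    obtain ⟨k, -, rfl⟩ := mem_diagSub_iff.mp hf
    exact ⟨(1, k), rfl⟩

theorem mem_rist_iff {m : ℕ} {G : Subgroup (Equiv.Perm (Vtx m))} {v : Vtx m}
    {g : Equiv.Perm (Vtx m)} :
    g ∈ rist m G v ↔ g ∈ G ∧ ∀ u : Vtx m, (u = v ∨ ¬ v <+: u) → g u = u := by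
  simp [rist, Subgroup.mem_inf, Subgroup.mem_iInf, MulAction.mem_stabilizer_iff,
    Equiv.Perm.smul_def]

theorem RistL_eq_bot_iff {m : ℕ} {G : Subgroup (Equiv.Perm (Vtx m))} {n : ℕ} :
    RistL m G n = ⊥ ↔ ∀ v : Vtx m, v.length = n → rist m G v = ⊥ :=
  iSup₂_eq_bot

theorem rist_eq_bot_of_le_range_consPerm {m : ℕ} [Nontrivial (Fin m)]
    {G : Subgroup (Equiv.Perm (Vtx m))} (hG : G ≤ (consPerm : _ →* Equiv.Perm (Vtx m)).range)
    {v : Vtx m} (hv : v.length = 1) : rist m G v = ⊥ := by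
  obtain ⟨x₀, rfl⟩ := List.length_eq_one_iff.mp hv
  refine eq_bot_iff.mpr fun g hg => ?_
  obtain ⟨hgG, hfix⟩ := mem_rist_iff.mp hg
  obtain ⟨p, rfl⟩ := hG hgG
  refine consPerm_eq_one x₀ fun x u hxu => hfix _ ?_
  by_cases hx : x = x₀
  · subst hx
    exact .inl (by rw [hxu.resolve_left (not_not.mpr rfl)])
  · exact .inr fun h => hx (List.cons_prefix_cons.mp h).1.symm

theorem statement13_general (m : ℕ) (hm : 2 ≤ m) (H : Subgroup (Equiv.Perm (Fin m)))
    (K : Subgroup (Equiv.Perm (Vtx m))) :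
    (∀ v : Vtx m, v.length = 1 → rist m (diagGroup m H K) v = ⊥) ∧
    RistL m (diagGroup m H K) 1 = ⊥ ∧
    ¬ (∀ n : ℕ, 1 ≤ n → RistL m (diagGroup m H K) n ≠ ⊥) := by
  have : Nontrivial (Fin m) := Fin.nontrivial_iff_two_le.mpr hm
  have hrist : ∀ v : Vtx m, v.length = 1 → rist m (diagGroup m H K) v = ⊥ := fun _ hv =>
    rist_eq_bot_of_le_range_consPerm (diagGroup_le_range_consPerm m H K) hv
  have hRist : RistL m (diagGroup m H K) 1 = ⊥ := RistL_eq_bot_iff.mpr hrist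
  exact ⟨hrist, hRist, fun hweak => hweak 1 le_rfl hRist⟩

/-- For `G_K = ⟨H, D_m(K)⟩` the first rigid level stabilizer is trivial:
`rist_{G_K}(v) = 1` for every first-level vertex `v`, hence `Rist_{G_K}(1) = 1` and `G_K`
is not weakly branch. -/
theorem statement13 (m : ℕ) (hm : 2 ≤ m) (H : Subgroup (Equiv.Perm (Fin m)))
    (hHtrans : ∀ x y : Fin m, ∃ σ ∈ H, σ x = y)
    (K : Subgroup (Equiv.Perm (Vtx m))) (hKW : K ≤ wreath m H) (hKcl : IsTreeClosed m K) :
    (∀ v : Vtx m, v.length = 1 → rist m (diagGroup m H K) v = ⊥) ∧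
    RistL m (diagGroup m H K) 1 = ⊥ ∧
    ¬ (∀ n : ℕ, 1 ≤ n → RistL m (diagGroup m H K) n ≠ ⊥) :=
  statement13_general m hm H K
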